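/- Let (W,S) be the Coxeter system with S = {s_1, s_2, s_3} and m_{s_1s_2} = 3, m_{s_2s_3} = ∞, m_{s_1s_3} = 2. Then the prescribed linear operators for s_1, s_2, s_3 on V := ℂu_0 ⊕ ⊕_{i≥1}(ℂu_i ⊕ ℂv_i) define a representation of W on V; that is, each operator is an involution, the operators for s_1 and s_2 satisfy ((s_1s_2)-operator)^3 = id, the operators for s_1 and s_3 commute, and hence s ↦ (its operator) extends to a group homomorphism from W to GL(V). -/

import Mathlib

/-- The Coxeter matrix with `S = {s₁, s₂, s₃}` (indexed by `Fin 3`), `m_{s₁s₂} = 3`,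
`m_{s₂s₃} = ∞` (encoded as `0` in Mathlib) and `m_{s₁s₃} = 2`. -/
def sec5Matrix : CoxeterMatrix (Fin 3) where
  M := !![1, 3, 2; 3, 1, 0; 2, 0, 1]
  off_diagonal := by
    intro i i' h
    fin_cases i <;> fin_cases i' <;> simp_all

/-- The Section 5 operators on basis vectors.  The basis of
`V = ℂu₀ ⊕ ⊕_{i ≥ 1} (ℂuᵢ ⊕ ℂvᵢ)` is indexed by `ℕ ⊕ ℕ`, with `Sum.inl i ↦ uᵢ` (`i ≥ 0`) and
`Sum.inr j ↦ v_{j+1}` (`j ≥ 0`).  The formulas are: `s₁·uᵢ = uᵢ`, `s₁·vᵢ = −vᵢ`;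
`s₂·u₀ = u₀`, `s₂·uᵢ = (3vᵢ − uᵢ)/2` and `s₂·vᵢ = (uᵢ + vᵢ)/2` for `i ≥ 1`;
`s₃·u_{2k} = u_{2k+1}`, `s₃·u_{2k+1} = u_{2k}`, `s₃·v_{2k−1} = v_{2k}`, `s₃·v_{2k} = v_{2k−1}`
(which on indices `Sum.inl i`, resp. `v_{j+1} = Sum.inr j`, is
`n ↦ n + 1` for `n` even and `n ↦ n − 1` for `n` odd). -/
noncomputable def sec5Basis (s : Fin 3) (x : ℕ ⊕ ℕ) : (ℕ ⊕ ℕ) →₀ ℂ :=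
  if s = 0 then
    match x with
    | Sum.inl i => Finsupp.single (Sum.inl i) 1
    | Sum.inr j => -Finsupp.single (Sum.inr j) 1
  else if s = 1 then
    match x with
    | Sum.inl 0 => Finsupp.single (Sum.inl 0) 1
    | Sum.inl (i + 1) => ((3 : ℂ) / 2) • Finsupp.single (Sum.inr i) 1 -
        ((1 : ℂ) / 2) • Finsupp.single (Sum.inl (i + 1)) 1
    | Sum.inr j => ((1 : ℂ) / 2) • Finsupp.single (Sum.inl (j + 1)) 1 +
        ((1 : ℂ) / 2) • Finsupp.single (Sum.inr j) 1
  else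
    match x with
    | Sum.inl i => Finsupp.single (Sum.inl (if Even i then i + 1 else i - 1)) 1
    | Sum.inr j => Finsupp.single (Sum.inr (if Even j then j + 1 else j - 1)) 1

/-- The Section 5 operators, as linear endomorphisms of `V = (ℕ ⊕ ℕ) →₀ ℂ`. -/
noncomputable def sec5Act (s : Fin 3) : ((ℕ ⊕ ℕ) →₀ ℂ) →ₗ[ℂ] ((ℕ ⊕ ℕ) →₀ ℂ) :=
  Finsupp.lift _ ℂ _ (sec5Basis s)

/-!
The operator of `s₁` is `+1` on the `uᵢ` and `−1` on the `vᵢ`; that of `s₂` fixes `u₀` and is a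
reflection of each plane `ℂuᵢ ⊕ ℂvᵢ` (`i ≥ 1`), so on each such plane `s₁s₂` is a rotation of order
three. The operator of `s₃` permutes the basis preserving the `u`/`v` type, so it commutes with
that of `s₁`. These checks on basis vectors are all of the Coxeter relations, the one for
`m_{s₂s₃} = ∞` being vacuous, and `CoxeterSystem.lift` then gives the representation.
-/

section CoxeterRelations

variable {G : Type*} [Monoid G] {a b : G}

theorem pow_mul_rev_eq_one_of_mul_self_eq_one {n : ℕ} (hb : b * b = 1) (h : (a * b) ^ n = 1) :
    (b * a) ^ n = 1 := by
  calc (b * a) ^ n = (b * a) ^ n * b * b := by rw [mul_assoc, hb, mul_one]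
    _ = b * (a * b) ^ n * b := by rw [mul_pow_mul]
    _ = 1 := by rw [h, mul_one, hb]

theorem Commute.mul_sq_eq_one (hab : Commute a b) (ha : a * a = 1) (hb : b * b = 1) :
    (a * b) ^ 2 = 1 := by
  rw [hab.mul_pow, sq, sq, ha, hb, one_mul]

theorem CoxeterMatrix.isLiftable_of_lt {B : Type*} [LinearOrder B] (M : CoxeterMatrix B)
    {f : B → G} (hf : ∀ i, f i * f i = 1) (hlt : ∀ i j, i < j → (f i * f j) ^ M i j = 1) :
    M.IsLiftable f := by
  intro i j
  rcases lt_trichotomy i j with h | rfl | h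
  · exact hlt i j h
  · rw [M.diagonal, pow_one, hf]
  · rw [M.symmetric]
    exact pow_mul_rev_eq_one_of_mul_self_eq_one (hf i) (hlt j i h)

end CoxeterRelations

def parityPartner (n : ℕ) : ℕ := if Even n then n + 1 else n - 1

theorem parityPartner_involutive : Function.Involutive parityPartner := by
  intro n
  rcases Nat.even_or_odd n with h | h
  · simp [parityPartner, h, Nat.even_add_one]
  · simp [parityPartner, Nat.not_even_iff_odd.mpr h, Nat.Odd.sub_odd h odd_one,
      Nat.sub_add_cancel h.pos]

section Operators

open Finsupp

theorem sec5Act_zero_single_inl (i : ℕ) :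
    sec5Act 0 (single (Sum.inl i) 1) = single (Sum.inl i) 1 := by
  simp [sec5Act, sec5Basis]

theorem sec5Act_zero_single_inr (j : ℕ) :
    sec5Act 0 (single (Sum.inr j) 1) = -single (Sum.inr j) 1 := by
  simp [sec5Act, sec5Basis]

theorem sec5Act_one_single_inl_zero :
    sec5Act 1 (single (Sum.inl 0) 1) = single (Sum.inl 0) 1 := by
  simp [sec5Act, sec5Basis]

theorem sec5Act_one_single_inl_succ (i : ℕ) :
    sec5Act 1 (single (Sum.inl (i + 1)) 1) =
      (3 / 2 : ℂ) • single (Sum.inr i) 1 - (1 / 2 : ℂ) • single (Sum.inl (i + 1)) 1 := by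
  simp [sec5Act, sec5Basis]

theorem sec5Act_one_single_inr (j : ℕ) :
    sec5Act 1 (single (Sum.inr j) 1) =
      (1 / 2 : ℂ) • single (Sum.inl (j + 1)) 1 + (1 / 2 : ℂ) • single (Sum.inr j) 1 := by
  simp [sec5Act, sec5Basis]

theorem sec5Act_two_single (x : ℕ ⊕ ℕ) :
    sec5Act 2 (single x 1) = single (Sum.map parityPartner parityPartner x) 1 := by
  cases x <;> simp [sec5Act, sec5Basis, parityPartner]

theorem sec5Act_zero_mul_self : sec5Act 0 * sec5Act 0 = 1 := by
  refine lhom_ext' fun x => LinearMap.ext_ring ?_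
  cases x <;> simp [sec5Act_zero_single_inl, sec5Act_zero_single_inr]

theorem sec5Act_one_mul_self : sec5Act 1 * sec5Act 1 = 1 := by
  refine lhom_ext' fun x => LinearMap.ext_ring ?_
  obtain (_ | i) | j := x <;>
    simp only [LinearMap.comp_apply, lsingle_apply, Module.End.mul_apply, Module.End.one_apply,
      map_add, map_sub, map_smul, sec5Act_one_single_inl_zero, sec5Act_one_single_inl_succ,
      sec5Act_one_single_inr] <;>
    module

theorem sec5Act_two_mul_self : sec5Act 2 * sec5Act 2 = 1 := by
  refine lhom_ext' fun x => LinearMap.ext_ring ?_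
  cases x <;> simp [sec5Act_two_single, parityPartner_involutive _]

theorem sec5Act_zero_mul_one_pow_three : (sec5Act 0 * sec5Act 1) ^ 3 = 1 := by
  refine lhom_ext' fun x => LinearMap.ext_ring ?_
  obtain (_ | i) | j := x <;>
    simp only [pow_succ, pow_zero, one_mul, LinearMap.comp_apply, lsingle_apply,
      Module.End.mul_apply, Module.End.one_apply, map_add, map_sub, map_smul, map_neg, smul_neg,
      sec5Act_zero_single_inl, sec5Act_zero_single_inr, sec5Act_one_single_inl_zero,
      sec5Act_one_single_inl_succ, sec5Act_one_single_inr] <;>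
    module

theorem sec5Act_zero_commute_two : Commute (sec5Act 0) (sec5Act 2) := by
  refine lhom_ext' fun x => LinearMap.ext_ring ?_
  cases x <;> simp [sec5Act_two_single, sec5Act_zero_single_inl, sec5Act_zero_single_inr]

theorem sec5Matrix_isLiftable_sec5Act : sec5Matrix.IsLiftable sec5Act := by
  refine sec5Matrix.isLiftable_of_lt (fun s => ?_) fun s t hst => ?_
  · fin_cases s
    exacts [sec5Act_zero_mul_self, sec5Act_one_mul_self, sec5Act_two_mul_self]
  · fin_cases s <;> fin_cases t <;> simp only [Fin.lt_def] at hst <;> norm_num at hst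
    · exact sec5Act_zero_mul_one_pow_three
    · exact sec5Act_zero_commute_two.mul_sq_eq_one sec5Act_zero_mul_self sec5Act_two_mul_self
    · exact pow_zero _

end Operators

/-- the Section 5 operators define a representation of the Coxeter group `W` of
the system with `m_{s₁s₂} = 3`, `m_{s₂s₃} = ∞`, `m_{s₁s₃} = 2` on
`V = ℂu₀ ⊕ ⊕_{i ≥ 1}(ℂuᵢ ⊕ ℂvᵢ)`: each operator is an involution, the operators of `s₁, s₂`
satisfy `((s₁s₂)-operator)³ = id`, the operators of `s₁, s₃` commute, and hence
`s ↦ (its operator)` extends to a group homomorphism from `W` to `GL(V)`, i.e. to a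
representation of `W`. -/
theorem statement10 {W : Type*} [Group W] (cs : CoxeterSystem sec5Matrix W) :
    (∀ s : Fin 3, sec5Act s * sec5Act s = 1) ∧
    (sec5Act 0 * sec5Act 1) ^ 3 = 1 ∧
    sec5Act 0 * sec5Act 2 = sec5Act 2 * sec5Act 0 ∧
    ∃ ρ : Representation ℂ W ((ℕ ⊕ ℕ) →₀ ℂ), ∀ s : Fin 3, ρ (cs.simple s) = sec5Act s := by
  refine ⟨fun s => ?_, sec5Act_zero_mul_one_pow_three, sec5Act_zero_commute_two, ?_⟩
  · simpa using sec5Matrix_isLiftable_sec5Act s s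
  · exact ⟨cs.lift ⟨sec5Act, sec5Matrix_isLiftable_sec5Act⟩,
      cs.lift_apply_simple sec5Matrix_isLiftable_sec5Act⟩
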